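/- Let M be a MAGNN, P a binary predicate, C_1 an ELUQ concept, C_2 an ELUQ concept containing no disjunction (no ⊔), n a positive integer, and A a unary predicate. If the rule ≥_n P.C_1 ⊓ C_2 ⊑ A is sound for M, then the rule ∃P.⊤ ⊓ C_2 ⊑ A is sound for M. -/

import Mathlib

open scoped BigOperators

namespace KG

/-- A fact over a signature with `δ` unary predicates (indexed by `Fin δ`) and
binary predicates indexed by `Col`; constants are natural numbers. -/
inductive Fact (δ : ℕ) (Col : Type) where
  | unary : Fin δ → ℕ → Fact δ Col
  | binary : Col → ℕ → ℕ → Fact δ Col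
deriving DecidableEq

/-- A dataset is a finite set of facts. -/
abbrev Dataset (δ : ℕ) (Col : Type) [DecidableEq Col] := Finset (Fact δ Col)

variable {δ : ℕ} {Col : Type} [DecidableEq Col] [Fintype Col]

/-- The (finite) set of constants occurring in a dataset. -/
def conD (D : Dataset δ Col) : Finset ℕ :=
  D.biUnion fun f =>
    match f with
    | .unary _ a => {a}
    | .binary _ a b => {a, b}

/-- The `P`-successors of `a` in `D`. -/
def nbrs (D : Dataset δ Col) (P : Col) (a : ℕ) : Finset ℕ :=
  (conD D).filter fun d => Fact.binary P a d ∈ D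

/-- A mean-aggregation GNN with `L ≥ 1` layers, over the signature with `δ` unary
predicates and binary predicates `Col`.  `dims ℓ` is the dimension of the layer-`ℓ`
vectors, with `dims 0 = dims L = δ`; `A ℓ` and `B P ℓ` are the matrices and `bias ℓ`
the bias vector used to compute the layer-`(ℓ+1)` vectors; `act ℓ` is the
(monotonically increasing, continuous, non-negatively valued) activation function
applied there, and `t` is the classification threshold. -/
structure GNN (δ : ℕ) (Col : Type) where
  L : ℕ
  hL : 1 ≤ L
  dims : ℕ → ℕ
  dims0 : dims 0 = δ
  dimsL : dims L = δ
  A : (ℓ : ℕ) → Matrix (Fin (dims (ℓ + 1))) (Fin (dims ℓ)) ℝ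
  B : Col → (ℓ : ℕ) → Matrix (Fin (dims (ℓ + 1))) (Fin (dims ℓ)) ℝ
  bias : (ℓ : ℕ) → Fin (dims (ℓ + 1)) → ℝ
  act : ℕ → ℝ → ℝ
  act_mono : ∀ ℓ, Monotone (act ℓ)
  act_cont : ∀ ℓ, Continuous (act ℓ)
  act_nonneg : ∀ ℓ x, 0 ≤ act ℓ x
  t : ℝ

/-- The layer-`ℓ` vector that the GNN `M` assigns to the constant `a` on input
dataset `D`.  The mean of an empty family is the zero vector (`0 / 0 = 0` in `ℝ`). -/
noncomputable def GNN.val (M : GNN δ Col) (D : Dataset δ Col) :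
    (ℓ : ℕ) → ℕ → Fin (M.dims ℓ) → ℝ
  | 0, a, i => if Fact.unary (Fin.cast M.dims0 i) a ∈ D then (1 : ℝ) else 0
  | ℓ + 1, a, i =>
      M.act ℓ (M.bias ℓ i
        + (M.A ℓ).mulVec (fun j => M.val D ℓ a j) i
        + ∑ P : Col, (M.B P ℓ).mulVec
            (fun j => (∑ d ∈ nbrs D P a, M.val D ℓ d j) / ((nbrs D P a).card : ℝ)) i)

/-- The dataset transformation induced by the GNN `M`:
`T_M(D) = { Uᵢ(a) : a ∈ con(D), v^a_L[i] ≥ t }`. -/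
def GNN.T (M : GNN δ Col) (D : Dataset δ Col) : Set (Fact δ Col) :=
  { f | ∃ (A : Fin δ) (a : ℕ), f = Fact.unary A a ∧ a ∈ conD D ∧
      M.t ≤ M.val D M.L a (Fin.cast M.dimsL.symm A) }

/-- A GNN is monotonic (is a MAGNN) if all matrix entries are non-negative. -/
def GNN.Monotonic (M : GNN δ Col) : Prop :=
  (∀ ℓ i j, 0 ≤ M.A ℓ i j) ∧ (∀ P ℓ i j, 0 ≤ M.B P ℓ i j)

/-- Concepts in the syntax `C ::= ⊤ | A | C ⊓ C' | C ⊔ C' | ≥ₙ P.C`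
(`∃P.C` is `≥₁ P.C`); ELUQ concepts are those in which every `≥ₙ` has `n ≥ 1`. -/
inductive Concept (δ : ℕ) (Col : Type) where
  | top : Concept δ Col
  | atom : Fin δ → Concept δ Col
  | and : Concept δ Col → Concept δ Col → Concept δ Col
  | or : Concept δ Col → Concept δ Col → Concept δ Col
  | atLeast : ℕ → Col → Concept δ Col → Concept δ Col
deriving DecidableEq

/-- A concept is a (well-formed) ELUQ concept when every `≥ₙ` has `n` a positive integer. -/
inductive ELUQ : Concept δ Col → Prop
  | top : ELUQ .top
  | atom (A : Fin δ) : ELUQ (.atom A)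
  | and {C₁ C₂} : ELUQ C₁ → ELUQ C₂ → ELUQ (.and C₁ C₂)
  | or {C₁ C₂} : ELUQ C₁ → ELUQ C₂ → ELUQ (.or C₁ C₂)
  | atLeast {C} (n : ℕ) (P : Col) (hn : 1 ≤ n) : ELUQ C → ELUQ (.atLeast n P C)

/-- Satisfaction of a concept by a constant over a dataset. -/
def sat (D : Dataset δ Col) : ℕ → Concept δ Col → Prop
  | _, .top => True
  | c, .atom A => Fact.unary A c ∈ D
  | c, .and C₁ C₂ => sat D c C₁ ∧ sat D c C₂
  | c, .or C₁ C₂ => sat D c C₁ ∨ sat D c C₂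
  | c, .atLeast n P C =>
      ∃ S : Finset ℕ, S.card = n ∧ ∀ d ∈ S, Fact.binary P c d ∈ D ∧ sat D d C

/-- A rule `C ⊑ A`. -/
structure Rule (δ : ℕ) (Col : Type) where
  body : Concept δ Col
  head : Fin δ
deriving DecidableEq

/-- Immediate consequences of a rule on a dataset. -/
def Rule.T (r : Rule δ Col) (D : Dataset δ Col) : Set (Fact δ Col) :=
  { f | ∃ a : ℕ, f = Fact.unary r.head a ∧ a ∈ conD D ∧ sat D a r.body }

/-- A rule is sound for a GNN if its consequences are always among the GNN's. -/
def Sound (r : Rule δ Col) (M : GNN δ Col) : Prop :=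
  ∀ D : Dataset δ Col, r.T D ⊆ M.T D


/-- A concept contains no disjunction (no `⊔`) anywhere. -/
inductive NoDisj : Concept δ Col → Prop
  | top : NoDisj .top
  | atom (A : Fin δ) : NoDisj (.atom A)
  | and {C₁ C₂} : NoDisj C₁ → NoDisj C₂ → NoDisj (.and C₁ C₂)
  | atLeast {C} (n : ℕ) (P : Col) : NoDisj C → NoDisj (.atLeast n P C)

/-! ### Auxiliary lemmas for the proof of `drop_atLeast_sound` -/

section AuxBasic

lemma mem_conD_unary {D : Dataset δ Col} {i : Fin δ} {c : ℕ}
    (h : Fact.unary i c ∈ D) : c ∈ conD D :=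
  Finset.mem_biUnion.2 ⟨_, h, by simp⟩

lemma mem_conD_binary_left {D : Dataset δ Col} {Q : Col} {c d : ℕ}
    (h : Fact.binary Q c d ∈ D) : c ∈ conD D :=
  Finset.mem_biUnion.2 ⟨_, h, by simp⟩

lemma mem_conD_binary_right {D : Dataset δ Col} {Q : Col} {c d : ℕ}
    (h : Fact.binary Q c d ∈ D) : d ∈ conD D :=
  Finset.mem_biUnion.2 ⟨_, h, by simp⟩

lemma conD_mono {D D' : Dataset δ Col} (h : D ⊆ D') : conD D ⊆ conD D' :=
  Finset.biUnion_subset_biUnion_of_subset_left _ h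

lemma nbrs_subset_conD {D : Dataset δ Col} {Q : Col} {a : ℕ} : nbrs D Q a ⊆ conD D :=
  Finset.filter_subset _ _

lemma mem_nbrs {D : Dataset δ Col} {Q : Col} {a d : ℕ} :
    d ∈ nbrs D Q a ↔ d ∈ conD D ∧ Fact.binary Q a d ∈ D := Finset.mem_filter

lemma mem_nbrs_of {D : Dataset δ Col} {Q : Col} {a d : ℕ}
    (h : Fact.binary Q a d ∈ D) : d ∈ nbrs D Q a :=
  mem_nbrs.2 ⟨mem_conD_binary_right h, h⟩

lemma sat_mono {D D' : Dataset δ Col} (h : D ⊆ D') :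
    ∀ (C : Concept δ Col) (c : ℕ), sat D c C → sat D' c C := by
  intro C
  induction C with
  | top => intro c _; trivial
  | atom A => intro c hc; exact h hc
  | and C₁ C₂ ih₁ ih₂ => intro c hc; exact ⟨ih₁ c hc.1, ih₂ c hc.2⟩
  | or C₁ C₂ ih₁ ih₂ => intro c hc; exact hc.imp (ih₁ c) (ih₂ c)
  | atLeast n' Q C ih =>
      intro c hc
      obtain ⟨S, hScard, hS⟩ := hc
      exact ⟨S, hScard, fun d hd => ⟨h (hS d hd).1, ih d (hS d hd).2⟩⟩

/-- The largest counting threshold occurring in a concept. -/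
def maxCount : Concept δ Col → ℕ
  | .top => 0
  | .atom _ => 0
  | .and C₁ C₂ => max (maxCount C₁) (maxCount C₂)
  | .or C₁ C₂ => max (maxCount C₁) (maxCount C₂)
  | .atLeast n _ C => max n (maxCount C)

/-- A "clique" dataset on a set of constants `E`: all unary and binary facts on `E`. -/
def cliqueD (E : Finset ℕ) : Dataset δ Col :=
  (E.biUnion fun e => (Finset.univ : Finset (Fin δ)).image fun i => Fact.unary i e) ∪
  ((E ×ˢ E).biUnion fun p => (Finset.univ : Finset Col).image fun P => Fact.binary P p.1 p.2)

lemma mem_cliqueD_unary {E : Finset ℕ} {i : Fin δ} {e : ℕ} :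
    (Fact.unary i e : Fact δ Col) ∈ cliqueD E ↔ e ∈ E := by
  simp [cliqueD]

lemma mem_cliqueD_binary {E : Finset ℕ} {Q : Col} {x y : ℕ} :
    (Fact.binary Q x y : Fact δ Col) ∈ cliqueD E ↔ x ∈ E ∧ y ∈ E := by
  simp [cliqueD]

lemma nbrs_cliqueD (i₀ : Fin δ) {E : Finset ℕ} {e : ℕ} (he : e ∈ E) (Q : Col) :
    nbrs (cliqueD E : Dataset δ Col) Q e = E := by
  ext d
  simp only [nbrs, Finset.mem_filter]
  constructor
  · rintro ⟨-, hf⟩; exact (mem_cliqueD_binary.1 hf).2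
  · intro hd
    exact ⟨mem_conD_unary (i := i₀) (mem_cliqueD_unary.2 hd),
      mem_cliqueD_binary.2 ⟨he, hd⟩⟩

lemma sat_cliqueD {E : Finset ℕ} :
    ∀ C : Concept δ Col, maxCount C ≤ E.card → ∀ e ∈ E, sat (cliqueD E) e C := by
  intro C
  induction C with
  | top => intro _ e _; trivial
  | atom A => intro _ e he; exact mem_cliqueD_unary.2 he
  | and C₁ C₂ ih₁ ih₂ =>
      intro h e he
      simp only [maxCount, max_le_iff] at h
      exact ⟨ih₁ h.1 e he, ih₂ h.2 e he⟩
  | or C₁ C₂ ih₁ ih₂ =>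
      intro h e he
      simp only [maxCount, max_le_iff] at h
      exact Or.inl (ih₁ h.1 e he)
  | atLeast n' Q C ih =>
      intro h e he
      simp only [maxCount, max_le_iff] at h
      obtain ⟨T, hTE, hTcard⟩ := Finset.exists_subset_card_eq h.1
      exact ⟨T, hTcard, fun d hd =>
        ⟨mem_cliqueD_binary.2 ⟨he, hTE hd⟩, ih h.2 d (hTE hd)⟩⟩

/-- Renaming facts along a map of constants. -/
def mapFact (f : ℕ → ℕ) : Fact δ Col → Fact δ Col
  | .unary i c => .unary i (f c)
  | .binary P c d => .binary P (f c) (f d)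

def mapD (f : ℕ → ℕ) (D : Dataset δ Col) : Dataset δ Col := D.image (mapFact f)

lemma mem_mapD_unary {f : ℕ → ℕ} {D : Dataset δ Col} {i : Fin δ} {c : ℕ} :
    Fact.unary i c ∈ mapD f D ↔ ∃ x, Fact.unary i x ∈ D ∧ f x = c := by
  simp only [mapD, Finset.mem_image]
  constructor
  · rintro ⟨g, hg, hmap⟩
    cases g with
    | unary i' x =>
        simp only [mapFact, Fact.unary.injEq] at hmap
        obtain ⟨rfl, rfl⟩ := hmap
        exact ⟨x, hg, rfl⟩
    | binary Q x y => simp [mapFact] at hmap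
  · rintro ⟨x, hx, rfl⟩; exact ⟨Fact.unary i x, hx, rfl⟩

lemma mem_mapD_binary {f : ℕ → ℕ} {D : Dataset δ Col} {Q : Col} {x y : ℕ} :
    Fact.binary Q x y ∈ mapD f D ↔ ∃ u v, Fact.binary Q u v ∈ D ∧ f u = x ∧ f v = y := by
  simp only [mapD, Finset.mem_image]
  constructor
  · rintro ⟨g, hg, hmap⟩
    cases g with
    | unary i' u => simp [mapFact] at hmap
    | binary Q' u v =>
        simp only [mapFact, Fact.binary.injEq] at hmap
        obtain ⟨rfl, rfl, rfl⟩ := hmap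
        exact ⟨u, v, hg, rfl, rfl⟩
  · rintro ⟨u, v, huv, rfl, rfl⟩; exact ⟨Fact.binary Q u v, huv, rfl⟩

/-- Simulation lemma: if `f` maps `X` into `D₂` preserving unary facts and
neighbourhoods, then GNN values agree along `f`. -/
lemma val_eq_of_sim (M : GNN δ Col) (D₁ D₂ : Dataset δ Col) (f : ℕ → ℕ) (X : Set ℕ)
    (hinj : Function.Injective f)
    (hX : ∀ c ∈ X, ∀ Q : Col, ∀ d ∈ nbrs D₁ Q c, d ∈ X)
    (hun : ∀ c ∈ X, ∀ i : Fin δ, (Fact.unary i (f c) ∈ D₂ ↔ Fact.unary i c ∈ D₁))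
    (hnb : ∀ c ∈ X, ∀ Q : Col, nbrs D₂ Q (f c) = (nbrs D₁ Q c).image f) :
    ∀ ℓ, ∀ c ∈ X, ∀ i, M.val D₂ ℓ (f c) i = M.val D₁ ℓ c i := by
  intro ℓ
  induction ℓ with
  | zero =>
      intro c hc i
      simp only [GNN.val]
      rw [if_congr (hun c hc _) rfl rfl]
  | succ ℓ ih =>
      intro c hc i
      simp only [GNN.val]
      have hv : (fun j => M.val D₂ ℓ (f c) j) = fun j => M.val D₁ ℓ c j :=
        funext fun j => ih c hc j
      rw [hv]
      have hs : ∀ Q : Col,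
          (fun j => (∑ d ∈ nbrs D₂ Q (f c), M.val D₂ ℓ d j) / ((nbrs D₂ Q (f c)).card : ℝ)) =
          (fun j => (∑ d ∈ nbrs D₁ Q c, M.val D₁ ℓ d j) / ((nbrs D₁ Q c).card : ℝ)) := by
        intro Q
        funext j
        rw [hnb c hc Q, Finset.sum_image (fun x _ y _ h => hinj h),
            Finset.card_image_of_injective _ hinj]
        congr 1
        exact Finset.sum_congr rfl fun d hd => ih d (hX c hc Q d hd) j
      simp only [hs]

end AuxBasic
section AuxConstruction

/-- Fresh constants `N, N+1, …, N+n-1`. -/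
def En (N n : ℕ) : Finset ℕ := (Finset.range n).image (N + ·)

lemma mem_En {N n e : ℕ} : e ∈ En N n ↔ ∃ i < n, e = N + i := by
  simp [En, eq_comm]

lemma En_bounds {N n e : ℕ} (h : e ∈ En N n) : N ≤ e ∧ e < N + n := by
  obtain ⟨i, hi, rfl⟩ := mem_En.1 h; omega

lemma En_mono {N n m : ℕ} (h : n ≤ m) : En N n ⊆ En N m :=
  Finset.image_subset_image (Finset.range_subset_range.2 h)

lemma card_En (N n : ℕ) : (En N n).card = n := by
  rw [En, Finset.card_image_of_injective _ (add_right_injective N), Finset.card_range]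

/-- The `j`-th copy map for constants. -/
def phi (N m j c : ℕ) : ℕ := N + m + j * N + c

lemma phi_inj (N m j : ℕ) : Function.Injective (phi N m j) := fun x y h => by
  simpa [phi] using h

lemma phi_ge {N m j c : ℕ} : N + m ≤ phi N m j c := by
  simp only [phi]; omega

lemma phi_eq_phi {N m j j' x x' : ℕ} (hx : x < N) (hx' : x' < N)
    (h : phi N m j x = phi N m j' x') : j = j' ∧ x = x' := by
  have hN0 : 0 < N := Nat.pos_of_ne_zero (by omega)
  simp only [phi] at h
  have e1 : N * j + x = N * j' + x' := by
    rw [Nat.mul_comm N j, Nat.mul_comm N j']; omega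
  have hj : j = j' := by
    have := congrArg (fun t => t / N) e1
    simpa [Nat.mul_add_div hN0, Nat.div_eq_of_lt hx, Nat.div_eq_of_lt hx'] using this
  subst hj
  exact ⟨rfl, by omega⟩

/-- The dataset used in the limit argument: `D`, a saturated clique on `m` fresh
constants, `k` disjoint copies of `D`, and `P`-edges from `a` to `n` clique
constants and to every copy of every `P`-successor of `a`. -/
def bigD (D : Dataset δ Col) (P : Col) (a N m n k : ℕ) : Dataset δ Col :=
  ((D ∪ cliqueD (En N m)) ∪ (Finset.range k).biUnion fun j => mapD (phi N m j) D) ∪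
  (((En N n).image fun d => Fact.binary P a d) ∪
   (Finset.range k).biUnion fun j => (nbrs D P a).image fun s => Fact.binary P a (phi N m j s))

lemma subset_bigD {D : Dataset δ Col} {P : Col} {a N m n k : ℕ} :
    D ⊆ bigD D P a N m n k := fun f hf => by
  simp only [bigD, Finset.mem_union]; tauto

lemma cliqueD_subset_bigD {D : Dataset δ Col} {P : Col} {a N m n k : ℕ} :
    cliqueD (En N m) ⊆ bigD D P a N m n k := fun f hf => by
  simp only [bigD, Finset.mem_union]; tauto

lemma mem_bigD_unary {D : Dataset δ Col} {P : Col} {a N m n k : ℕ} {i : Fin δ} {c : ℕ} :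
    Fact.unary i c ∈ bigD D P a N m n k ↔
      Fact.unary i c ∈ D ∨ c ∈ En N m ∨
        ∃ j < k, ∃ x, Fact.unary i x ∈ D ∧ phi N m j x = c := by
  simp only [bigD, Finset.mem_union, Finset.mem_biUnion, Finset.mem_range, Finset.mem_image,
    mem_mapD_unary, mem_cliqueD_unary]
  constructor
  · rintro (((h | h) | ⟨j, hj, x, hx, rfl⟩) | (⟨d, hd, h⟩ | ⟨j, hj, s, hs, h⟩))
    · exact Or.inl h
    · exact Or.inr (Or.inl h)
    · exact Or.inr (Or.inr ⟨j, hj, x, hx, rfl⟩)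
    · exact absurd h (by simp)
    · exact absurd h (by simp)
  · rintro (h | h | ⟨j, hj, x, hx, rfl⟩)
    · exact Or.inl (Or.inl (Or.inl h))
    · exact Or.inl (Or.inl (Or.inr h))
    · exact Or.inl (Or.inr ⟨j, hj, x, hx, rfl⟩)

lemma mem_bigD_binary {D : Dataset δ Col} {P : Col} {a N m n k : ℕ} {Q : Col} {x y : ℕ} :
    Fact.binary Q x y ∈ bigD D P a N m n k ↔
      Fact.binary Q x y ∈ D ∨ (x ∈ En N m ∧ y ∈ En N m) ∨
        (∃ j < k, ∃ u v, Fact.binary Q u v ∈ D ∧ phi N m j u = x ∧ phi N m j v = y) ∨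
        (Q = P ∧ x = a ∧ y ∈ En N n) ∨
        (Q = P ∧ x = a ∧ ∃ j < k, ∃ s ∈ nbrs D P a, phi N m j s = y) := by
  simp only [bigD, Finset.mem_union, Finset.mem_biUnion, Finset.mem_range, Finset.mem_image,
    mem_mapD_binary, mem_cliqueD_binary]
  constructor
  · rintro (((h | h) | ⟨j, hj, u, v, huv, rfl, rfl⟩) | (⟨d, hd, h⟩ | ⟨j, hj, s, hs, h⟩))
    · exact Or.inl h
    · exact Or.inr (Or.inl h)
    · exact Or.inr (Or.inr (Or.inl ⟨j, hj, u, v, huv, rfl, rfl⟩))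
    · obtain ⟨rfl, rfl, rfl⟩ := Fact.binary.inj h
      exact Or.inr (Or.inr (Or.inr (Or.inl ⟨rfl, rfl, hd⟩)))
    · obtain ⟨rfl, rfl, rfl⟩ := Fact.binary.inj h
      exact Or.inr (Or.inr (Or.inr (Or.inr ⟨rfl, rfl, j, hj, s, hs, rfl⟩)))
  · rintro (h | h | ⟨j, hj, u, v, huv, rfl, rfl⟩ | ⟨rfl, rfl, hd⟩ | ⟨rfl, rfl, j, hj, s, hs, rfl⟩)
    · exact Or.inl (Or.inl (Or.inl h))
    · exact Or.inl (Or.inl (Or.inr h))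
    · exact Or.inl (Or.inr ⟨j, hj, u, v, huv, rfl, rfl⟩)
    · exact Or.inr (Or.inl ⟨y, hd, rfl⟩)
    · exact Or.inr (Or.inr ⟨j, hj, s, hs, rfl⟩)

end AuxConstruction
section AuxNbrs

variable {D : Dataset δ Col} {P : Col} {a N m n k : ℕ}

lemma nbrs_bigD_of_ne (hN : ∀ c ∈ conD D, c < N) {c : ℕ} (hc : c ∈ conD D)
    {Q : Col} (hne : ¬(c = a ∧ Q = P)) :
    nbrs (bigD D P a N m n k) Q c = nbrs D Q c := by
  have hcN := hN c hc
  ext d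
  simp only [mem_nbrs]
  constructor
  · rintro ⟨hdc, hf⟩
    rcases mem_bigD_binary.1 hf with h | ⟨h1, h2⟩ | ⟨j, hj, u, v, huv, hux, hvy⟩
      | ⟨rfl, rfl, -⟩ | ⟨rfl, rfl, -⟩
    · exact ⟨mem_conD_binary_right h, h⟩
    · exact absurd (En_bounds h1).1 (by omega)
    · have := phi_ge (N := N) (m := m) (j := j) (c := u); omega
    · exact absurd ⟨rfl, rfl⟩ hne
    · exact absurd ⟨rfl, rfl⟩ hne
  · rintro ⟨hdc, hf⟩
    exact ⟨conD_mono subset_bigD hdc, subset_bigD hf⟩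

lemma nbrs_bigD_a (hN : ∀ c ∈ conD D, c < N) (ha : a ∈ conD D) :
    nbrs (bigD D P a N m n k) P a =
      (nbrs D P a ∪ En N n) ∪
        (Finset.range k).biUnion (fun j => (nbrs D P a).image (phi N m j)) := by
  have haN := hN a ha
  ext d
  rw [mem_nbrs]
  simp only [Finset.mem_union, Finset.mem_biUnion, Finset.mem_range, Finset.mem_image]
  constructor
  · rintro ⟨hdc, hf⟩
    rcases mem_bigD_binary.1 hf with h | ⟨h1, h2⟩ | ⟨j, hj, u, v, huv, hux, hvy⟩
      | ⟨-, -, hd⟩ | ⟨-, -, j, hj, s, hs, hphi⟩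
    · exact Or.inl (Or.inl (mem_nbrs_of h))
    · exact absurd (En_bounds h1).1 (by omega)
    · have := phi_ge (N := N) (m := m) (j := j) (c := u); omega
    · exact Or.inl (Or.inr hd)
    · exact Or.inr ⟨j, hj, s, hs, hphi⟩
  · rintro ((hd | hd) | ⟨j, hj, s, hs, rfl⟩)
    · exact ⟨conD_mono subset_bigD (nbrs_subset_conD hd), subset_bigD (mem_nbrs.1 hd).2⟩
    · have hf : Fact.binary P a d ∈ bigD D P a N m n k :=
        mem_bigD_binary.2 (Or.inr (Or.inr (Or.inr (Or.inl ⟨rfl, rfl, hd⟩))))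
      exact ⟨mem_conD_binary_right hf, hf⟩
    · have hf : Fact.binary P a (phi N m j s) ∈ bigD D P a N m n k :=
        mem_bigD_binary.2 (Or.inr (Or.inr (Or.inr (Or.inr ⟨rfl, rfl, j, hj, s, hs, rfl⟩))))
      exact ⟨mem_conD_binary_right hf, hf⟩

lemma nbrs_bigD_clique (hN : ∀ c ∈ conD D, c < N) (ha : a ∈ conD D)
    {e : ℕ} (he : e ∈ En N m) (Q : Col) :
    nbrs (bigD D P a N m n k) Q e = En N m := by
  have haN := hN a ha
  have heb := En_bounds he
  ext d
  simp only [mem_nbrs]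
  constructor
  · rintro ⟨-, hf⟩
    rcases mem_bigD_binary.1 hf with h | ⟨h1, h2⟩ | ⟨j, hj, u, v, huv, hux, hvy⟩
      | ⟨-, h2, -⟩ | ⟨-, h2, -⟩
    · exact absurd (hN e (mem_conD_binary_left h)) (by omega)
    · exact h2
    · have := phi_ge (N := N) (m := m) (j := j) (c := u); omega
    · omega
    · omega
  · intro hd
    have hf : Fact.binary Q e d ∈ bigD D P a N m n k :=
      mem_bigD_binary.2 (Or.inr (Or.inl ⟨he, hd⟩))
    exact ⟨mem_conD_binary_right hf, hf⟩

lemma nbrs_bigD_copy (hN : ∀ c ∈ conD D, c < N) (ha : a ∈ conD D)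
    {j x : ℕ} (hj : j < k) (hx : x ∈ conD D) (Q : Col) :
    nbrs (bigD D P a N m n k) Q (phi N m j x) = (nbrs D Q x).image (phi N m j) := by
  have hxN := hN x hx
  have haN := hN a ha
  have hpg := phi_ge (N := N) (m := m) (j := j) (c := x)
  ext d
  rw [mem_nbrs]
  simp only [Finset.mem_image]
  constructor
  · rintro ⟨-, hf⟩
    rcases mem_bigD_binary.1 hf with h | ⟨h1, h2⟩ | ⟨j', hj', u, v, huv, hux, hvy⟩
      | ⟨-, h2, -⟩ | ⟨-, h2, -⟩
    · exact absurd (hN _ (mem_conD_binary_left h)) (by omega)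
    · have := (En_bounds h1).2; omega
    · have huN := hN u (mem_conD_binary_left huv)
      obtain ⟨rfl, rfl⟩ := phi_eq_phi huN hxN hux
      exact ⟨v, mem_nbrs_of huv, hvy⟩
    · omega
    · omega
  · rintro ⟨y, hy, rfl⟩
    have hf : Fact.binary Q (phi N m j x) (phi N m j y) ∈ bigD D P a N m n k :=
      mem_bigD_binary.2 (Or.inr (Or.inr (Or.inl ⟨j, hj, x, y, (mem_nbrs.1 hy).2, rfl, rfl⟩)))
    exact ⟨mem_conD_binary_right hf, hf⟩

lemma val_bigD_clique (M : GNN δ Col) (i₀ : Fin δ) (hN : ∀ c ∈ conD D, c < N)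
    (ha : a ∈ conD D) (ℓ : ℕ) {e : ℕ} (he : e ∈ En N m) (i : Fin (M.dims ℓ)) :
    M.val (bigD D P a N m n k) ℓ e i = M.val (cliqueD (En N m)) ℓ e i := by
  refine val_eq_of_sim M (cliqueD (En N m)) (bigD D P a N m n k) id ↑(En N m)
    Function.injective_id ?_ ?_ ?_ ℓ e he i
  · intro c hc Q d hd
    rw [nbrs_cliqueD i₀ hc Q] at hd
    exact hd
  · intro c hc i'
    exact iff_of_true (cliqueD_subset_bigD (mem_cliqueD_unary.2 hc))
      (mem_cliqueD_unary.2 hc)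
  · intro c hc Q
    rw [id_eq, nbrs_bigD_clique hN ha hc Q, nbrs_cliqueD i₀ hc Q, Finset.image_id]

lemma val_bigD_copy (M : GNN δ Col) (hN : ∀ c ∈ conD D, c < N)
    (ha : a ∈ conD D) {j : ℕ} (hj : j < k) (ℓ : ℕ) {x : ℕ} (hx : x ∈ conD D)
    (i : Fin (M.dims ℓ)) :
    M.val (bigD D P a N m n k) ℓ (phi N m j x) i = M.val D ℓ x i := by
  refine val_eq_of_sim M D (bigD D P a N m n k) (phi N m j) ↑(conD D)
    (phi_inj N m j) ?_ ?_ ?_ ℓ x hx i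
  · intro c hc Q d hd
    exact nbrs_subset_conD hd
  · intro c hc i'
    constructor
    · intro hf
      rcases mem_bigD_unary.1 hf with h | h | ⟨j', hj', x', hx', heq⟩
      · have := hN _ (mem_conD_unary h)
        have := phi_ge (N := N) (m := m) (j := j) (c := c); omega
      · have := (En_bounds h).2
        have := phi_ge (N := N) (m := m) (j := j) (c := c); omega
      · have hx'N := hN x' (mem_conD_unary hx')
        obtain ⟨rfl, rfl⟩ := phi_eq_phi hx'N (hN c hc) heq
        exact hx'
    · intro hf
      exact mem_bigD_unary.2 (Or.inr (Or.inr ⟨j, hj, c, hf, rfl⟩))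
  · intro c hc Q
    exact nbrs_bigD_copy hN ha hj hc Q

end AuxNbrs
section AuxLimit

lemma tendsto_aux {u : ℕ → ℝ} {V W s₀ c₀ : ℝ} (hs : 0 < s₀) (hc : 0 ≤ c₀)
    (hu : Filter.Tendsto u Filter.atTop (nhds V)) :
    Filter.Tendsto (fun k : ℕ => (u k + W + (k : ℝ) * V) / (c₀ + (k : ℝ) * s₀))
      Filter.atTop (nhds (V / s₀)) := by
  have hk0 : Filter.Tendsto (fun k : ℕ => ((k : ℝ))⁻¹) Filter.atTop (nhds 0) :=
    tendsto_inv_atTop_nhds_zero_nat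
  have hnum : Filter.Tendsto (fun k : ℕ => (u k + W) * ((k : ℝ))⁻¹ + V)
      Filter.atTop (nhds V) := by
    have h1 : Filter.Tendsto (fun k : ℕ => (u k + W) * ((k : ℝ))⁻¹)
        Filter.atTop (nhds 0) := by
      have h2 := (hu.add_const W).mul hk0
      simpa using h2
    simpa using h1.add_const V
  have hden : Filter.Tendsto (fun k : ℕ => c₀ * ((k : ℝ))⁻¹ + s₀)
      Filter.atTop (nhds s₀) := by
    have h2 := (hk0.const_mul c₀).add_const s₀
    simpa using h2
  have h := hnum.div hden (ne_of_gt hs)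
  refine h.congr' ?_
  filter_upwards [Filter.eventually_ge_atTop 1] with k hk
  have hkR : (0 : ℝ) < (k : ℝ) := by exact_mod_cast hk
  have hk' : ((k : ℝ)) ≠ 0 := ne_of_gt hkR
  have hkinv : (0 : ℝ) < ((k : ℝ))⁻¹ := inv_pos.2 hkR
  have hden1 : c₀ * ((k : ℝ))⁻¹ + s₀ ≠ 0 := by nlinarith
  have hden2 : c₀ + (k : ℝ) * s₀ ≠ 0 := by nlinarith
  simp only [Pi.div_apply]
  field_simp

lemma val_bigD_tendsto (M : GNN δ Col) (D : Dataset δ Col) (P : Col) (a N m n : ℕ)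
    (i₀ : Fin δ) (hN : ∀ c ∈ conD D, c < N) (ha : a ∈ conD D)
    (hnm : n ≤ m) (hSne : (nbrs D P a).Nonempty) :
    ∀ ℓ, ∀ c ∈ conD D, ∀ i : Fin (M.dims ℓ),
      Filter.Tendsto (fun k => M.val (bigD D P a N m n k) ℓ c i) Filter.atTop
        (nhds (M.val D ℓ c i)) := by
  intro ℓ
  induction ℓ with
  | zero =>
      intro c hc i
      have he : ∀ k, M.val (bigD D P a N m n k) 0 c i = M.val D 0 c i := by
        intro k
        simp only [GNN.val]
        have hiff : (Fact.unary (Fin.cast M.dims0 i) c ∈ bigD D P a N m n k) ↔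
            Fact.unary (Fin.cast M.dims0 i) c ∈ D := by
          constructor
          · intro hf
            rcases mem_bigD_unary.1 hf with h | h | ⟨j, hj, x, hx, heq⟩
            · exact h
            · exact absurd (En_bounds h).1 (by have := hN c hc; omega)
            · have := phi_ge (N := N) (m := m) (j := j) (c := x)
              have := hN c hc; omega
          · exact fun h => subset_bigD h
        rw [if_congr hiff rfl rfl]
      simp only [he]
      exact tendsto_const_nhds
  | succ ℓ ih =>
      intro c hc i
      have key : ∀ Q : Col, ∀ j : Fin (M.dims ℓ),
          Filter.Tendsto (fun k =>
              (∑ d ∈ nbrs (bigD D P a N m n k) Q c, M.val (bigD D P a N m n k) ℓ d j) /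
                ((nbrs (bigD D P a N m n k) Q c).card : ℝ)) Filter.atTop
            (nhds ((∑ d ∈ nbrs D Q c, M.val D ℓ d j) / ((nbrs D Q c).card : ℝ))) := by
        intro Q j
        by_cases hQ : c = a ∧ Q = P
        · obtain ⟨rfl, rfl⟩ := hQ
          have hSsub : nbrs D Q c ⊆ conD D := nbrs_subset_conD
          set S := nbrs D Q c with hSdef
          have hcard : 0 < S.card := Finset.card_pos.2 hSne
          have hd1 : Disjoint S (En N n) := by
            rw [Finset.disjoint_left]
            intro x hx hx'
            exact absurd (En_bounds hx').1 (by have := hN x (hSsub hx); omega)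
          have hd2 : ∀ k, Disjoint (S ∪ En N n)
              ((Finset.range k).biUnion fun j' => S.image (phi N m j')) := by
            intro k
            rw [Finset.disjoint_left]
            intro x hx hx'
            obtain ⟨j', hj', s, hs, rfl⟩ := by
              simpa [Finset.mem_biUnion, Finset.mem_image] using hx'
            have := phi_ge (N := N) (m := m) (j := j') (c := s)
            rcases Finset.mem_union.1 hx with h | h
            · have := hN _ (hSsub h); omega
            · have := (En_bounds h).2; omega
          have hpd : ∀ k : ℕ, (↑(Finset.range k) : Set ℕ).PairwiseDisjoint
              (fun j' => S.image (phi N m j')) := by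
            intro k j₁ hj₁ j₂ hj₂ hne
            simp only [Function.onFun]
            rw [Finset.disjoint_left]
            intro x hx hx'
            obtain ⟨s, hs, rfl⟩ := Finset.mem_image.1 hx
            obtain ⟨s', hs', heq⟩ := Finset.mem_image.1 hx'
            exact hne ((phi_eq_phi (hN _ (hSsub hs')) (hN _ (hSsub hs)) heq).1.symm)
          have hform : ∀ k : ℕ,
              (∑ d ∈ nbrs (bigD D Q c N m n k) Q c, M.val (bigD D Q c N m n k) ℓ d j) /
                ((nbrs (bigD D Q c N m n k) Q c).card : ℝ) =
              ((∑ d ∈ S, M.val (bigD D Q c N m n k) ℓ d j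
                  + ∑ d ∈ En N n, M.val (cliqueD (En N m)) ℓ d j)
                + (k : ℝ) * (∑ d ∈ S, M.val D ℓ d j)) /
                (((S.card + n : ℕ) : ℝ) + (k : ℝ) * (S.card : ℝ)) := by
            intro k
            rw [nbrs_bigD_a hN ha]
            rw [Finset.sum_union (hd2 k), Finset.sum_union hd1,
              Finset.card_union_of_disjoint (hd2 k), Finset.card_union_of_disjoint hd1,
              Finset.sum_biUnion (hpd k),
              Finset.card_biUnion (fun x hx y hy hxy =>
                hpd k (Finset.mem_coe.2 hx) (Finset.mem_coe.2 hy) hxy)]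
            have hsum1 : ∀ j' ∈ Finset.range k,
                (∑ d ∈ S.image (phi N m j'), M.val (bigD D Q c N m n k) ℓ d j)
                  = ∑ d ∈ S, M.val D ℓ d j := by
              intro j' hj'
              rw [Finset.sum_image (fun x _ y _ h => phi_inj N m j' h)]
              exact Finset.sum_congr rfl fun s hs =>
                val_bigD_copy M hN ha (Finset.mem_range.1 hj') ℓ (hSsub hs) j
            rw [Finset.sum_congr rfl hsum1, Finset.sum_const, Finset.card_range]
            have hsum2 : (∑ d ∈ En N n, M.val (bigD D Q c N m n k) ℓ d j)
                = ∑ d ∈ En N n, M.val (cliqueD (En N m)) ℓ d j :=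
              Finset.sum_congr rfl fun d hd =>
                val_bigD_clique M i₀ hN ha ℓ (En_mono hnm hd) j
            rw [hsum2]
            have hcard1 : ∀ j' ∈ Finset.range k, (S.image (phi N m j')).card = S.card :=
              fun j' _ => Finset.card_image_of_injective S (phi_inj N m j')
            rw [Finset.sum_congr rfl hcard1, Finset.sum_const, Finset.card_range,
              card_En, nsmul_eq_mul, smul_eq_mul]
            push_cast
            ring
          simp only [hform]
          have hV := tendsto_finset_sum S (fun d hd => ih d (hSsub hd) j)
          exact tendsto_aux (by exact_mod_cast hcard) (Nat.cast_nonneg _) hV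
        · have hnb : ∀ k, nbrs (bigD D P a N m n k) Q c = nbrs D Q c :=
            fun k => nbrs_bigD_of_ne hN hc hQ
          simp only [hnb]
          exact (tendsto_finset_sum _ fun d hd => ih d (nbrs_subset_conD hd) j).div_const _
      have hinner : Filter.Tendsto (fun k =>
          M.bias ℓ i + (M.A ℓ).mulVec (fun j => M.val (bigD D P a N m n k) ℓ c j) i
            + ∑ Q : Col, (M.B Q ℓ).mulVec (fun j =>
                (∑ d ∈ nbrs (bigD D P a N m n k) Q c, M.val (bigD D P a N m n k) ℓ d j) /
                  ((nbrs (bigD D P a N m n k) Q c).card : ℝ)) i) Filter.atTop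
          (nhds (M.bias ℓ i + (M.A ℓ).mulVec (fun j => M.val D ℓ c j) i
            + ∑ Q : Col, (M.B Q ℓ).mulVec (fun j =>
                (∑ d ∈ nbrs D Q c, M.val D ℓ d j) / ((nbrs D Q c).card : ℝ)) i)) := by
        apply Filter.Tendsto.add
        · apply Filter.Tendsto.add
          · exact tendsto_const_nhds
          · simp only [Matrix.mulVec, dotProduct]
            exact tendsto_finset_sum _ fun j _ => (ih c hc j).const_mul _
        · apply tendsto_finset_sum
          intro Q _
          simp only [Matrix.mulVec, dotProduct]
          exact tendsto_finset_sum _ fun j _ => (key Q j).const_mul _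
      simp only [GNN.val]
      exact ((M.act_cont ℓ).tendsto _).comp hinner

end AuxLimit
/-- For a MAGNN `M`, a binary predicate `P`, ELUQ concepts
`C₁` and `C₂` with `C₂` disjunction-free, a positive integer `n`, and a unary
predicate `A`: if `≥ₙ P.C₁ ⊓ C₂ ⊑ A` is sound for `M`, then so is `∃P.⊤ ⊓ C₂ ⊑ A`. -/
theorem drop_atLeast_sound (M : GNN δ Col) (hM : M.Monotonic) (P : Col)
    (C₁ C₂ : Concept δ Col) (hC₁ : ELUQ C₁) (hC₂ : ELUQ C₂) (hnd : NoDisj C₂)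
    (n : ℕ) (hn : 1 ≤ n) (A : Fin δ)
    (hsound : Sound ⟨Concept.and (Concept.atLeast n P C₁) C₂, A⟩ M) :
    Sound ⟨Concept.and (Concept.atLeast 1 P Concept.top) C₂, A⟩ M := by
  intro D f hf
  obtain ⟨a, hfa, haD, hsat⟩ := hf
  obtain ⟨hsat1, hsat2⟩ := hsat
  obtain ⟨S₀, hS₀card, hS₀⟩ := hsat1
  have hS₀ne : S₀.Nonempty := Finset.card_pos.1 (by omega)
  obtain ⟨b, hb⟩ := hS₀ne
  have hab : Fact.binary P a b ∈ D := (hS₀ b hb).1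
  have hSne : (nbrs D P a).Nonempty := ⟨b, mem_nbrs_of hab⟩
  set N : ℕ := (conD D).sup id + 1 with hNdef
  have hN : ∀ c ∈ conD D, c < N := fun c hc =>
    Nat.lt_succ_of_le (Finset.le_sup (f := id) hc)
  set m : ℕ := max n (maxCount C₁) with hmdef
  have hnm : n ≤ m := le_max_left _ _
  have hsatk : ∀ k, sat (bigD D P a N m n k) a
      (Concept.and (Concept.atLeast n P C₁) C₂) := by
    intro k
    refine ⟨⟨En N n, card_En N n, fun d hd => ⟨?_, ?_⟩⟩, ?_⟩
    · exact mem_bigD_binary.2 (Or.inr (Or.inr (Or.inr (Or.inl ⟨rfl, rfl, hd⟩))))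
    · have hdm : d ∈ En N m := En_mono hnm hd
      have hs := sat_cliqueD (E := En N m) C₁
        (by rw [card_En]; exact le_max_right _ _) d hdm
      exact sat_mono cliqueD_subset_bigD C₁ d hs
    · exact sat_mono subset_bigD C₂ a hsat2
  have hta : ∀ k, M.t ≤ M.val (bigD D P a N m n k) M.L a (Fin.cast M.dimsL.symm A) := by
    intro k
    have hmem : Fact.unary A a ∈
        (Rule.T ⟨Concept.and (Concept.atLeast n P C₁) C₂, A⟩ (bigD D P a N m n k)) :=
      ⟨a, rfl, conD_mono subset_bigD haD, hsatk k⟩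
    obtain ⟨A', a', heq, -, hle⟩ := hsound (bigD D P a N m n k) hmem
    obtain ⟨h1, h2⟩ := Fact.unary.inj heq
    subst h1; subst h2
    exact hle
  have htends := val_bigD_tendsto M D P a N m n A hN haD hnm hSne M.L a haD
    (Fin.cast M.dimsL.symm A)
  exact ⟨A, a, hfa, haD, ge_of_tendsto' htends hta⟩

end KG
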